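/- Let W be a finitely-valued random variable jointly distributed with a finitely-valued sequence A^n = (A1, …, An), and let B^n and C^n be produced from A^n through a memoryless degraded cascade: there exist stochastic kernels q_B(b|a) and q_C(c|b) such that, conditioned on A^n, the pairs (B_i, C_i) for i = 1, …, n are mutually independent and independent of W, with Pr(B_i = b, C_i = c | A^n) = q_B(b | A_i) · q_C(c | b). Then ∑_{i=1}^{n} I( (A^{i−1}, B_{i+1}^n); C_i | W, C_{i+1}^n ) ≤ ∑_{i=1}^{n} I( B_{i+1}^n; A_i | W, A^{i−1} ). -/

import Mathlib

open scoped BigOperators Classical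

noncomputable section

namespace BRSec

variable {Ω : Type*} [Fintype Ω]

/-- Probability that the random variable `X` takes the value `a`, under the weight `p`. -/
def prb (p : Ω → ℝ) {α : Type*} (X : Ω → α) (a : α) : ℝ :=
  ∑ ω, if X ω = a then p ω else 0

/-- `p` is a probability mass function on the finite sample space `Ω`. -/
def IsPMF (p : Ω → ℝ) : Prop :=
  (∀ ω, 0 ≤ p ω) ∧ ∑ ω, p ω = 1

/-- Shannon entropy of the finitely-valued random variable `X`. -/
def H (p : Ω → ℝ) {α : Type*} [Fintype α] (X : Ω → α) : ℝ :=
  ∑ a, Real.negMulLog (prb p X a)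

/-- Mutual information `I(X;Y)`. -/
def MI (p : Ω → ℝ) {α β : Type*} [Fintype α] [Fintype β] (X : Ω → α) (Y : Ω → β) : ℝ :=
  H p X + H p Y - H p fun ω => (X ω, Y ω)

/-- Conditional mutual information `I(X;Y|Z)`. -/
def CMI (p : Ω → ℝ) {α β γ : Type*} [Fintype α] [Fintype β] [Fintype γ]
    (X : Ω → α) (Y : Ω → β) (Z : Ω → γ) : ℝ :=
  (H p fun ω => (X ω, Z ω)) + (H p fun ω => (Y ω, Z ω))
    - (H p fun ω => (X ω, Y ω, Z ω)) - H p Z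

/-- `X → Y → Z` is a Markov chain: `X` and `Z` are conditionally independent given `Y`. -/
def MarkovTriple (p : Ω → ℝ) {α β γ : Type*} (X : Ω → α) (Y : Ω → β) (Z : Ω → γ) : Prop :=
  ∀ a b c,
    prb p (fun ω => (X ω, Y ω, Z ω)) (a, b, c) * prb p Y b
      = prb p (fun ω => (X ω, Y ω)) (a, b) * prb p (fun ω => (Y ω, Z ω)) (b, c)

/-! For each letter `i`, the chain rule splits the `i`-th summand on the left as
`I(A^{i-1}; C_i | W, C_{i+1}^n) + I(B_{i+1}^n; C_i | A^{i-1}, W, C_{i+1}^n)`.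
Given `(A^{i-1}, W, C_{i+1}^n)`, `B_{i+1}^n - A_i - C_i` is a Markov chain, so data processing
bounds the second term by `I(B_{i+1}^n; A_i | A^{i-1}, W, C_{i+1}^n)`; given `(W, A^{i-1})`,
`C_{i+1}^n - B_{i+1}^n - A_i` is a Markov chain, so that term equals
`I(B_{i+1}^n; A_i | W, A^{i-1}) - I(C_{i+1}^n; A_i | W, A^{i-1})`. The leftover terms
`I(A^{i-1}; C_i | W, C_{i+1}^n)` and `I(C_{i+1}^n; A_i | W, A^{i-1})` have equal sums over `i`
(Csiszár's sum identity). Both Markov chains are read off a factorisation of the joint law of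
`(C_i, W, A_i, A^{i-1}, B_{i+1}^n, C_{i+1}^n)`. -/

lemma sub_le_mul_log_sub_log {P Q : ℝ} (hP : 0 ≤ P) (hQ : 0 ≤ Q) (hPQ : 0 < P → 0 < Q) :
    P - Q ≤ P * (Real.log P - Real.log Q) := by
  rcases hP.eq_or_lt with rfl | hP
  · simpa using hQ
  have hQ := hPQ hP
  have h := mul_le_mul_of_nonneg_left (Real.log_le_sub_one_of_pos (div_pos hQ hP)) hP.le
  have hPQ' : P * (Q / P - 1) = Q - P := by field_simp
  rw [Real.log_div hQ.ne' hP.ne', hPQ'] at h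
  linarith

section Basic

variable {p : Ω → ℝ} {α β γ : Type*}

lemma prb_nonneg (hp : ∀ ω, 0 ≤ p ω) (X : Ω → α) (a : α) : 0 ≤ prb p X a :=
  Finset.sum_nonneg fun ω _ => by split_ifs <;> simp [hp ω]

lemma prb_congr {X : Ω → α} {Y : Ω → β} {a : α} {b : β} (h : ∀ ω, X ω = a ↔ Y ω = b) :
    prb p X a = prb p Y b := by
  simp only [prb, h]

lemma prb_le_prb (hp : ∀ ω, 0 ≤ p ω) {X : Ω → α} {Y : Ω → β} {a : α} {b : β}
    (h : ∀ ω, X ω = a → Y ω = b) : prb p X a ≤ prb p Y b :=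
  Finset.sum_le_sum fun ω _ => by
    by_cases hX : X ω = a
    · simp [hX, h ω hX]
    · simp only [hX, if_false]; split_ifs <;> simp [hp ω]

lemma sum_prb [Fintype α] (X : Ω → α) : ∑ a, prb p X a = ∑ ω, p ω := by
  simp only [prb]
  rw [Finset.sum_comm]
  simp

lemma sum_prb_fst [Fintype α] (X : Ω → α) (Y : Ω → β) (b : β) :
    ∑ a, prb p (fun ω => (X ω, Y ω)) (a, b) = prb p Y b := by
  simp only [prb, Prod.ext_iff]
  rw [Finset.sum_comm]
  refine Finset.sum_congr rfl fun ω _ => ?_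
  by_cases hY : Y ω = b <;> simp [hY]

lemma sum_prb_snd [Fintype β] (X : Ω → α) (Y : Ω → β) (a : α) :
    ∑ b, prb p (fun ω => (X ω, Y ω)) (a, b) = prb p X a := by
  simp only [prb, Prod.ext_iff]
  rw [Finset.sum_comm]
  refine Finset.sum_congr rfl fun ω _ => ?_
  by_cases hX : X ω = a <;> simp [hX]

lemma prb_comp_eq_sum [Fintype α] (V : Ω → α) (f : α → β) (b : β) :
    prb p (fun ω => f (V ω)) b = ∑ v, if f v = b then prb p V v else 0 := by
  calc prb p (fun ω => f (V ω)) b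
      = ∑ ω, ∑ v, if V ω = v then (if f v = b then p ω else 0) else 0 := by
        simp [prb, Finset.sum_ite_eq]
    _ = _ := by
        rw [Finset.sum_comm]
        refine Finset.sum_congr rfl fun v _ => ?_
        split_ifs <;> simp [prb]

lemma sum_mul_comp_eq_sum_prb_mul [Fintype α] (V : Ω → α) (F : α → ℝ) :
    ∑ ω, p ω * F (V ω) = ∑ v, prb p V v * F v := by
  simp only [prb, Finset.sum_mul, ite_mul, zero_mul]
  rw [Finset.sum_comm]
  simp

lemma prb_pair_eq_sum [Fintype γ] (X : Ω → α) (Y : Ω → β) (Z : Ω → γ) (a : α) (b : β) :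
    prb p (fun ω => (X ω, Y ω)) (a, b) = ∑ c, prb p (fun ω => (X ω, Y ω, Z ω)) (a, b, c) := by
  rw [← sum_prb_snd (fun ω => (X ω, Y ω)) Z (a, b)]
  exact Finset.sum_congr rfl fun c _ => prb_congr fun ω => by simp [Prod.ext_iff, and_assoc]

lemma prb_marginals_pos (hp : ∀ ω, 0 ≤ p ω) {X : Ω → α} {Y : Ω → β} {Z : Ω → γ}
    {x : α} {y : β} {z : γ} (h : 0 < prb p (fun ω => (X ω, Y ω, Z ω)) (x, y, z)) :
    0 < prb p (fun ω => (X ω, Z ω)) (x, z) ∧ 0 < prb p (fun ω => (Y ω, Z ω)) (y, z)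
      ∧ 0 < prb p Z z :=
  ⟨h.trans_le (prb_le_prb hp fun ω => by simp +contextual [Prod.ext_iff]),
    h.trans_le (prb_le_prb hp fun ω => by simp +contextual [Prod.ext_iff]),
    h.trans_le (prb_le_prb hp fun ω => by simp +contextual [Prod.ext_iff])⟩

lemma markovTriple_of_factorization [Fintype α] [Fintype γ] {X : Ω → α} {Y : Ω → β} {Z : Ω → γ}
    {F : α → β → ℝ} {G : β → γ → ℝ}
    (h : ∀ a b c, prb p (fun ω => (X ω, Y ω, Z ω)) (a, b, c) = F a b * G b c) :
    MarkovTriple p X Y Z := by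
  intro a b c
  have hXY : prb p (fun ω => (X ω, Y ω)) (a, b) = F a b * ∑ c, G b c := by
    simp [prb_pair_eq_sum X Y Z, h, Finset.mul_sum]
  have hYZ : prb p (fun ω => (Y ω, Z ω)) (b, c) = (∑ a, F a b) * G b c := by
    simp [← sum_prb_fst X (fun ω => (Y ω, Z ω)), h, Finset.sum_mul]
  have hY : prb p Y b = (∑ a, F a b) * ∑ c, G b c := by
    simp [← sum_prb_fst X Y b, prb_pair_eq_sum X Y Z, h, Finset.sum_mul_sum]
  rw [h, hXY, hYZ, hY]
  ring

end Basic

section Information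

variable {p : Ω → ℝ} {α β γ δ : Type*} [Fintype α] [Fintype β] [Fintype γ] [Fintype δ]

lemma H_eq_neg_sum_log (X : Ω → α) : H p X = -∑ ω, p ω * Real.log (prb p X (X ω)) := by
  simp only [H, Real.negMulLog, neg_mul, Finset.sum_neg_distrib,
    sum_mul_comp_eq_sum_prb_mul X fun a => Real.log (prb p X a)]

lemma H_congr {X : Ω → α} {Y : Ω → β} (h : ∀ ω ω', X ω = X ω' ↔ Y ω = Y ω') :
    H p X = H p Y := by
  simp only [H_eq_neg_sum_log, prb_congr (h · _)]

lemma CMI_congr {α' β' γ' : Type*} [Fintype α'] [Fintype β'] [Fintype γ']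
    {X : Ω → α} {Y : Ω → β} {Z : Ω → γ} {X' : Ω → α'} {Y' : Ω → β'} {Z' : Ω → γ'}
    (hX : ∀ ω ω', X ω = X ω' ↔ X' ω = X' ω') (hY : ∀ ω ω', Y ω = Y ω' ↔ Y' ω = Y' ω')
    (hZ : ∀ ω ω', Z ω = Z ω' ↔ Z' ω = Z' ω') :
    CMI p X Y Z = CMI p X' Y' Z' := by
  simp only [CMI]
  rw [H_congr (X := fun ω => (X ω, Z ω)) (Y := fun ω => (X' ω, Z' ω))
      (by simp [Prod.ext_iff, hX, hZ]),
    H_congr (X := fun ω => (Y ω, Z ω)) (Y := fun ω => (Y' ω, Z' ω))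
      (by simp [Prod.ext_iff, hY, hZ]),
    H_congr (X := fun ω => (X ω, Y ω, Z ω)) (Y := fun ω => (X' ω, Y' ω, Z' ω))
      (by simp [Prod.ext_iff, hX, hY, hZ]),
    H_congr hZ]

lemma CMI_comm (X : Ω → α) (Y : Ω → β) (Z : Ω → γ) : CMI p X Y Z = CMI p Y X Z := by
  have h : H p (fun ω => (X ω, Y ω, Z ω)) = H p (fun ω => (Y ω, X ω, Z ω)) :=
    H_congr fun _ _ => by simp only [Prod.ext_iff]; tauto
  simp only [CMI, h]
  ring

lemma CMI_cond_swap (X : Ω → α) (Y : Ω → β) (Z : Ω → γ) (V : Ω → δ) :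
    CMI p X Y (fun ω => (Z ω, V ω)) = CMI p X Y (fun ω => (V ω, Z ω)) :=
  CMI_congr (fun _ _ => Iff.rfl) (fun _ _ => Iff.rfl) fun _ _ => by simp only [Prod.mk.injEq]; tauto

lemma CMI_pair_left (X : Ω → α) (Y : Ω → β) (Z : Ω → γ) (V : Ω → δ) :
    CMI p (fun ω => (X ω, Y ω)) Z V = CMI p X Z V + CMI p Y Z (fun ω => (X ω, V ω)) := by
  have h₁ : H p (fun ω => ((X ω, Y ω), V ω)) = H p (fun ω => (Y ω, X ω, V ω)) :=
    H_congr fun _ _ => by simp only [Prod.ext_iff]; tauto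
  have h₂ : H p (fun ω => ((X ω, Y ω), Z ω, V ω)) = H p (fun ω => (Y ω, Z ω, X ω, V ω)) :=
    H_congr fun _ _ => by simp only [Prod.ext_iff]; tauto
  have h₃ : H p (fun ω => (X ω, Z ω, V ω)) = H p (fun ω => (Z ω, X ω, V ω)) :=
    H_congr fun _ _ => by simp only [Prod.ext_iff]; tauto
  simp only [CMI, h₁, h₂, h₃]
  ring

lemma CMI_pair_right (X : Ω → α) (Y : Ω → β) (Z : Ω → γ) (V : Ω → δ) :
    CMI p X (fun ω => (Y ω, Z ω)) V = CMI p X Y V + CMI p X Z (fun ω => (Y ω, V ω)) := by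
  rw [CMI_comm, CMI_pair_left, CMI_comm Y, CMI_comm Z]

lemma CMI_eq_zero_of_subsingleton_left [Subsingleton α] (X : Ω → α) (Y : Ω → β) (Z : Ω → γ) :
    CMI p X Y Z = 0 := by
  have h₁ : H p (fun ω => (X ω, Z ω)) = H p Z :=
    H_congr fun ω ω' => by simp [Prod.ext_iff, Subsingleton.elim (X ω) (X ω')]
  have h₂ : H p (fun ω => (X ω, Y ω, Z ω)) = H p (fun ω => (Y ω, Z ω)) :=
    H_congr fun ω ω' => by simp [Prod.ext_iff, Subsingleton.elim (X ω) (X ω')]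
  simp only [CMI, h₁, h₂]
  ring

lemma CMI_eq_zero_of_subsingleton_mid [Subsingleton β] (X : Ω → α) (Y : Ω → β) (Z : Ω → γ) :
    CMI p X Y Z = 0 := by
  rw [CMI_comm]
  exact CMI_eq_zero_of_subsingleton_left Y X Z

lemma CMI_eq_sum_mul_log_sub_log (X : Ω → α) (Y : Ω → β) (Z : Ω → γ) :
    CMI p X Y Z = ∑ v, prb p (fun ω => (X ω, Y ω, Z ω)) v *
      (Real.log (prb p (fun ω => (X ω, Y ω, Z ω)) v) + Real.log (prb p Z v.2.2)
        - Real.log (prb p (fun ω => (X ω, Z ω)) (v.1, v.2.2))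
        - Real.log (prb p (fun ω => (Y ω, Z ω)) v.2)) := by
  rw [← sum_mul_comp_eq_sum_prb_mul]
  simp only [CMI, H_eq_neg_sum_log, ← Finset.sum_sub_distrib, ← Finset.sum_add_distrib,
    ← Finset.sum_neg_distrib]
  exact Finset.sum_congr rfl fun ω _ => by ring


lemma CMI_eq_sum_mul_log_sub_log_div (hp : ∀ ω, 0 ≤ p ω) (X : Ω → α) (Y : Ω → β) (Z : Ω → γ) :
    CMI p X Y Z = ∑ v, prb p (fun ω => (X ω, Y ω, Z ω)) v *
      (Real.log (prb p (fun ω => (X ω, Y ω, Z ω)) v)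
        - Real.log (prb p (fun ω => (X ω, Z ω)) (v.1, v.2.2)
            * prb p (fun ω => (Y ω, Z ω)) v.2 / prb p Z v.2.2)) := by
  rw [CMI_eq_sum_mul_log_sub_log]
  refine Finset.sum_congr rfl fun ⟨x, y, z⟩ _ => ?_
  rcases (prb_nonneg hp (fun ω => (X ω, Y ω, Z ω)) (x, y, z)).eq_or_lt with h | h
  · simp [← h]
  obtain ⟨hXZ, hYZ, hZ⟩ := prb_marginals_pos hp h
  rw [Real.log_div (by positivity) hZ.ne', Real.log_mul hXZ.ne' hYZ.ne']
  ring

lemma CMI_nonneg (hp : ∀ ω, 0 ≤ p ω) (X : Ω → α) (Y : Ω → β) (Z : Ω → γ) :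
    0 ≤ CMI p X Y Z := by
  set q := prb p (fun ω => (X ω, Y ω, Z ω))
  set r : α × β × γ → ℝ := fun v =>
    prb p (fun ω => (X ω, Z ω)) (v.1, v.2.2) * prb p (fun ω => (Y ω, Z ω)) v.2 / prb p Z v.2.2
  have hr : ∑ v, r v = ∑ v, q v := by
    calc ∑ v, r v
        = ∑ z, (∑ x, prb p (fun ω => (X ω, Z ω)) (x, z))
            * (∑ y, prb p (fun ω => (Y ω, Z ω)) (y, z)) / prb p Z z := by
          simp only [r, Fintype.sum_prod_type, Finset.sum_mul_sum, Finset.sum_div]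
          exact (Finset.sum_congr rfl fun x _ => Finset.sum_comm).trans Finset.sum_comm
      _ = ∑ v, q v := by simp only [q, sum_prb_fst, mul_self_div_self, sum_prb]
  have hterm : ∀ v, q v - r v ≤ q v * (Real.log (q v) - Real.log (r v)) := fun v =>
    sub_le_mul_log_sub_log (prb_nonneg hp _ v)
      (div_nonneg (mul_nonneg (prb_nonneg hp _ _) (prb_nonneg hp _ _)) (prb_nonneg hp _ _))
      fun h => by obtain ⟨hXZ, hYZ, hZ⟩ := prb_marginals_pos hp h; positivity
  calc 0 = ∑ v, (q v - r v) := by rw [Finset.sum_sub_distrib, hr, sub_self]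
    _ ≤ ∑ v, q v * (Real.log (q v) - Real.log (r v)) := Finset.sum_le_sum fun v _ => hterm v
    _ = CMI p X Y Z := (CMI_eq_sum_mul_log_sub_log_div hp X Y Z).symm

lemma MarkovTriple.CMI_eq_zero (hp : ∀ ω, 0 ≤ p ω) {X : Ω → α} {Y : Ω → β} {Z : Ω → γ}
    (h : MarkovTriple p X Y Z) : CMI p X Z Y = 0 := by
  rw [CMI_eq_sum_mul_log_sub_log_div hp]
  refine Finset.sum_eq_zero fun ⟨a, c, b⟩ _ => ?_
  rcases (prb_nonneg hp (fun ω => (X ω, Z ω, Y ω)) (a, c, b)).eq_or_lt with h0 | hpos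
  · simp [← h0]
  obtain ⟨-, -, hY⟩ := prb_marginals_pos hp hpos
  have hXZY : prb p (fun ω => (X ω, Z ω, Y ω)) (a, c, b)
      = prb p (fun ω => (X ω, Y ω, Z ω)) (a, b, c) :=
    prb_congr fun ω => by simp only [Prod.mk.injEq]; tauto
  have hZY : prb p (fun ω => (Z ω, Y ω)) (c, b) = prb p (fun ω => (Y ω, Z ω)) (b, c) :=
    prb_congr fun ω => by simp only [Prod.mk.injEq]; tauto
  simp only [hZY, ← h a b c, mul_div_cancel_right₀ _ hY.ne', hXZY, sub_self, mul_zero]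

lemma CMI_le_CMI_of_CMI_eq_zero (hp : ∀ ω, 0 ≤ p ω) {X : Ω → α} {Y : Ω → β} {Z : Ω → γ}
    {V : Ω → δ} (h : CMI p X Z (fun ω => (Y ω, V ω)) = 0) : CMI p X Z V ≤ CMI p X Y V := by
  have hswap : CMI p X (fun ω => (Y ω, Z ω)) V = CMI p X (fun ω => (Z ω, Y ω)) V :=
    CMI_congr (fun _ _ => Iff.rfl) (fun _ _ => by simp only [Prod.mk.injEq]; tauto)
      (fun _ _ => Iff.rfl)
  linarith [CMI_pair_right (p := p) X Y Z V, CMI_pair_right (p := p) X Z Y V,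
    CMI_nonneg hp X Y fun ω => (Z ω, V ω)]

end Information

lemma CMI_pair_add_le {α β γ δ ε ζ : Type*} [Fintype α] [Fintype β] [Fintype γ] [Fintype δ]
    [Fintype ε] [Fintype ζ] {p : Ω → ℝ} (hp : ∀ ω, 0 ≤ p ω)
    {X : Ω → α} {Y : Ω → β} {Z : Ω → γ} {U : Ω → δ} {V : Ω → ε} {W : Ω → ζ}
    (hYZ : CMI p Y Z (fun ω => (U ω, X ω, W ω, V ω)) = 0)
    (hVU : CMI p V U (fun ω => (Y ω, W ω, X ω)) = 0) :
    CMI p (fun ω => (X ω, Y ω)) Z (fun ω => (W ω, V ω)) + CMI p V U (fun ω => (W ω, X ω))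
      ≤ CMI p Y U (fun ω => (W ω, X ω)) + CMI p X Z (fun ω => (W ω, V ω)) := by
  have hswap : CMI p (fun ω => (V ω, Y ω)) U (fun ω => (W ω, X ω))
      = CMI p (fun ω => (Y ω, V ω)) U (fun ω => (W ω, X ω)) :=
    CMI_congr (fun _ _ => by simp only [Prod.mk.injEq]; tauto) (fun _ _ => Iff.rfl)
      (fun _ _ => Iff.rfl)
  have hcond : CMI p Y U (fun ω => (V ω, W ω, X ω)) = CMI p Y U (fun ω => (X ω, W ω, V ω)) :=
    CMI_congr (fun _ _ => Iff.rfl) (fun _ _ => Iff.rfl)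
      (fun _ _ => by simp only [Prod.mk.injEq]; tauto)
  linarith [CMI_pair_left (p := p) X Y Z fun ω => (W ω, V ω),
    CMI_le_CMI_of_CMI_eq_zero hp hYZ,
    CMI_pair_left (p := p) V Y U fun ω => (W ω, X ω),
    CMI_pair_left (p := p) Y V U fun ω => (W ω, X ω)]

lemma forall_le_iff_forall_lt_and {ι : Type*} [PartialOrder ι] {P : ι → Prop} (i : ι) :
    (∀ j ≤ i, P j) ↔ (∀ j < i, P j) ∧ P i :=
  ⟨fun h => ⟨fun j hj => h j hj.le, h i le_rfl⟩,
    fun ⟨h, hi⟩ j hj => hj.lt_or_eq.elim (h j) fun e => e ▸ hi⟩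

lemma forall_ge_iff_forall_gt_and {ι : Type*} [PartialOrder ι] {P : ι → Prop} (i : ι) :
    (∀ j, i ≤ j → P j) ↔ (∀ j, i < j → P j) ∧ P i :=
  ⟨fun h => ⟨fun j hj => h j hj.le, h i le_rfl⟩,
    fun ⟨h, hi⟩ j hj => hj.lt_or_eq.elim (h j) fun e => e ▸ hi⟩

section Csiszar

variable {p : Ω → ℝ} {n : ℕ} {𝒲 α γ : Type*} [Fintype 𝒲] [Fintype α] [Fintype γ]

theorem csiszar_sum_identity (W : Ω → 𝒲) (A : Ω → Fin n → α) (C : Ω → Fin n → γ) :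
    ∑ i : Fin n, CMI p (fun ω => fun j : {j : Fin n // j < i} => A ω j.1) (fun ω => C ω i)
        (fun ω => (W ω, fun j : {j : Fin n // i < j} => C ω j.1))
      = ∑ i : Fin n, CMI p (fun ω => fun j : {j : Fin n // i < j} => C ω j.1) (fun ω => A ω i)
        (fun ω => (W ω, fun j : {j : Fin n // j < i} => A ω j.1)) := by
  set f : ℕ → ℝ := fun t => CMI p (fun ω => fun j : {j : Fin n // (j : ℕ) < t} => A ω j.1)
    (fun ω => fun j : {j : Fin n // t ≤ (j : ℕ)} => C ω j.1) W
  have hstep : ∀ i : Fin n, f (i + 1) - f i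
      = CMI p (fun ω => fun j : {j : Fin n // i < j} => C ω j.1) (fun ω => A ω i)
          (fun ω => (W ω, fun j : {j : Fin n // j < i} => A ω j.1))
        - CMI p (fun ω => fun j : {j : Fin n // j < i} => A ω j.1) (fun ω => C ω i)
          (fun ω => (W ω, fun j : {j : Fin n // i < j} => C ω j.1)) := by
    intro i
    have hsucc : f (i + 1) = CMI p (fun ω => ((fun j : {j : Fin n // j < i} => A ω j.1), A ω i))
        (fun ω => fun j : {j : Fin n // i < j} => C ω j.1) W :=
      CMI_congr (fun _ _ => by simp [funext_iff, Prod.ext_iff, forall_le_iff_forall_lt_and])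
        (fun _ _ => by simp [funext_iff]) (fun _ _ => Iff.rfl)
    have hself : f i = CMI p (fun ω => fun j : {j : Fin n // j < i} => A ω j.1)
        (fun ω => ((fun j : {j : Fin n // i < j} => C ω j.1), C ω i)) W :=
      CMI_congr (fun _ _ => by simp [funext_iff])
        (fun _ _ => by simp [funext_iff, Prod.ext_iff, forall_ge_iff_forall_gt_and])
        (fun _ _ => Iff.rfl)
    rw [hsucc, hself, CMI_pair_left, CMI_pair_right, CMI_comm (fun ω => A ω i), CMI_cond_swap,
      CMI_cond_swap (Y := fun ω => C ω i)]
    ring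
  have hzero : f 0 = 0 :=
    haveI : IsEmpty {j : Fin n // (j : ℕ) < 0} := ⟨fun j => Nat.not_lt_zero _ j.2⟩
    CMI_eq_zero_of_subsingleton_left _ _ _
  have hlast : f n = 0 :=
    haveI : IsEmpty {j : Fin n // n ≤ (j : ℕ)} := ⟨fun j => absurd j.1.isLt (not_lt.2 j.2)⟩
    CMI_eq_zero_of_subsingleton_mid _ _ _
  symm
  rw [← sub_eq_zero, ← Finset.sum_sub_distrib]
  simp only [← hstep]
  rw [Fin.sum_univ_eq_sum_range (fun t => f (t + 1) - f t), Finset.sum_range_sub, hlast, hzero,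
    sub_zero]

end Csiszar

section Split

variable {n : ℕ}

def splitAt (i : Fin n) (δ : Type*) :
    (Fin n → δ) ≃ ({j : Fin n // j < i} → δ) × δ × ({j : Fin n // i < j} → δ) where
  toFun a := (fun j => a j.1, a i, fun j => a j.1)
  invFun t j := if h : j < i then t.1 ⟨j, h⟩ else if h' : i < j then t.2.2 ⟨j, h'⟩ else t.2.1
  left_inv a := funext fun j => by
    dsimp only
    split_ifs with h h'
    · rfl
    · rfl
    · rw [le_antisymm (not_lt.1 h') (not_lt.1 h)]
  right_inv t := by
    obtain ⟨lo, m, hi⟩ := t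
    simp only [Prod.mk.injEq, lt_irrefl, dite_false]
    refine ⟨funext fun j => ?_, trivial, funext fun j => ?_⟩
    · simp [j.2]
    · simp [j.2, not_lt_of_gt j.2]

variable {i : Fin n} {δ : Type*}

lemma splitAt_symm_apply_lt (t : ({j : Fin n // j < i} → δ) × δ × ({j : Fin n // i < j} → δ))
    (j : {j : Fin n // j < i}) : (splitAt i δ).symm t j = t.1 j :=
  congrFun (congrArg Prod.fst ((splitAt i δ).apply_symm_apply t)) j

lemma splitAt_symm_apply_self (t : ({j : Fin n // j < i} → δ) × δ × ({j : Fin n // i < j} → δ)) :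
    (splitAt i δ).symm t i = t.2.1 :=
  congrArg (·.2.1) ((splitAt i δ).apply_symm_apply t)

lemma splitAt_symm_apply_gt (t : ({j : Fin n // j < i} → δ) × δ × ({j : Fin n // i < j} → δ))
    (j : {j : Fin n // i < j}) : (splitAt i δ).symm t j = t.2.2 j :=
  congrFun (congrArg (·.2.2) ((splitAt i δ).apply_symm_apply t)) j

lemma sum_splitAt [Fintype δ] (i : Fin n) (f : (Fin n → δ) → ℝ) :
    ∑ a, f a = ∑ lo, ∑ m, ∑ hi, f ((splitAt i δ).symm (lo, m, hi)) := by
  rw [← (splitAt i δ).symm.sum_comp]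
  simp only [Fintype.sum_prod_type]

lemma prod_splitAt (i : Fin n) (F : Fin n → ℝ) :
    ∏ j, F j = (∏ j : {j : Fin n // j < i}, F j) * F i * ∏ j : {j : Fin n // i < j}, F j := by
  have herase : Finset.univ.erase i
      = Finset.univ.filter (· < i) ∪ Finset.univ.filter (i < ·) := by
    ext j
    simp
  rw [← Finset.mul_prod_erase Finset.univ F (Finset.mem_univ i), herase,
    Finset.prod_union (Finset.disjoint_filter.2 fun j _ h h' => lt_asymm h h'),
    Finset.prod_subtype (p := (· < i)) _ (by simp) F,
    Finset.prod_subtype (p := (i < ·)) _ (by simp) F]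
  ring

end Split

def IsDegradedCascade {n : ℕ} {𝒲 α β γ : Type*} (p : Ω → ℝ) (W : Ω → 𝒲) (A : Ω → Fin n → α)
    (B : Ω → Fin n → β) (C : Ω → Fin n → γ) (qB : α → β → ℝ) (qC : β → γ → ℝ) : Prop :=
  ∀ w a b c, prb p (fun ω => (W ω, A ω, B ω, C ω)) (w, a, b, c)
    = prb p (fun ω => (W ω, A ω)) (w, a) * ∏ i, (qB (a i) (b i) * qC (b i) (c i))

lemma sum_prod_eq_one {ι α β : Type*} [Fintype ι] [Fintype β] [DecidableEq ι] {q : α → β → ℝ}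
    (hq : ∀ a, ∑ b, q a b = 1) (a : ι → α) : ∑ b : ι → β, ∏ j, q (a j) (b j) = 1 := by
  rw [← Fintype.prod_sum (fun j b => q (a j) b)]
  simp [hq]

section Cascade

variable {p : Ω → ℝ} {n : ℕ} {𝒲 α β γ : Type*} [Fintype 𝒲] [Fintype α] [Fintype β] [Fintype γ]

variable {W : Ω → 𝒲} {A : Ω → Fin n → α} {B : Ω → Fin n → β} {C : Ω → Fin n → γ}
  {qB : α → β → ℝ} {qC : β → γ → ℝ}

theorem IsDegradedCascade.exists_factorization (h : IsDegradedCascade p W A B C qB qC)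
    (hqB : ∀ a, ∑ b, qB a b = 1) (hqC : ∀ b, ∑ c, qC b c = 1) (i : Fin n) :
    ∃ τ : 𝒲 → α → ({j : Fin n // j < i} → α) → ({j : Fin n // i < j} → β) → ℝ,
      ∀ c w a al bh ch,
        prb p (fun ω => (C ω i, W ω, A ω i, (fun j : {j : Fin n // j < i} => A ω j.1),
            (fun j : {j : Fin n // i < j} => B ω j.1), (fun j : {j : Fin n // i < j} => C ω j.1)))
          (c, w, a, al, bh, ch)
        = (∑ b, qB a b * qC b c) * ((∏ j, qC (bh j) (ch j)) * τ w a al bh) := by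
  -- `τ w a al bh` is the probability that `W = w`, `A_{≤i} = (al, a)` and `B_{>i} = bh`.
  refine ⟨fun w a al bh => ∑ ah, prb p (fun ω => (W ω, A ω)) (w, (splitAt i α).symm (al, a, ah))
    * ∏ j, qB (ah j) (bh j), fun c w a al bh ch => ?_⟩
  rw [prb_comp_eq_sum (fun ω => (W ω, A ω, B ω, C ω)) (fun v => (v.2.2.2 i, v.1, v.2.1 i,
    (fun j : {j : Fin n // j < i} => v.2.1 j.1), (fun j : {j : Fin n // i < j} => v.2.2.1 j.1),
    (fun j : {j : Fin n // i < j} => v.2.2.2 j.1)))]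
  simp only [Fintype.sum_prod_type, sum_splitAt i, splitAt_symm_apply_lt, splitAt_symm_apply_self,
    splitAt_symm_apply_gt, Prod.mk.injEq, ite_and, Finset.sum_ite_eq', Finset.sum_ite_irrel,
    Finset.mem_univ, if_true, Finset.sum_const_zero, h _ _ _ _, prod_splitAt i,
    Finset.prod_mul_distrib]
  simp only [← Finset.mul_sum, ← Finset.sum_mul, sum_prod_eq_one hqC, sum_prod_eq_one hqB, mul_one,
    one_mul]
  rw [Finset.mul_sum, Finset.mul_sum]
  exact Finset.sum_congr rfl fun _ _ => by ring

theorem IsDegradedCascade.CMI_Cgt_Ai_eq_zero (hp : ∀ ω, 0 ≤ p ω)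
    (h : IsDegradedCascade p W A B C qB qC)
    (hqB : ∀ a, ∑ b, qB a b = 1) (hqC : ∀ b, ∑ c, qC b c = 1) (i : Fin n) :
    CMI p (fun ω => fun j : {j : Fin n // i < j} => C ω j.1) (fun ω => A ω i)
      (fun ω => ((fun j : {j : Fin n // i < j} => B ω j.1), W ω,
        fun j : {j : Fin n // j < i} => A ω j.1)) = 0 := by
  obtain ⟨τ, hτ⟩ := h.exists_factorization hqB hqC i
  refine MarkovTriple.CMI_eq_zero hp (markovTriple_of_factorization
    (F := fun ch z => ∏ j, qC (z.1 j) (ch j)) (G := fun z a => τ z.2.1 a z.2.2 z.1) ?_)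
  rintro ch ⟨bh, w, al⟩ a
  have hCi : ∑ c, ∑ b, qB a b * qC b c = 1 := by
    rw [Finset.sum_comm]
    simp [← Finset.mul_sum, hqC, hqB]
  calc _ = ∑ c, prb p (fun ω => (C ω i, W ω, A ω i, (fun j : {j : Fin n // j < i} => A ω j.1),
            (fun j : {j : Fin n // i < j} => B ω j.1), (fun j : {j : Fin n // i < j} => C ω j.1)))
          (c, w, a, al, bh, ch) := by
        rw [sum_prb_fst]
        exact prb_congr fun ω => by simp only [Prod.mk.injEq]; tauto
    _ = _ := by simp only [hτ, ← Finset.sum_mul, hCi, one_mul]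

theorem IsDegradedCascade.CMI_Bgt_Ci_eq_zero (hp : ∀ ω, 0 ≤ p ω)
    (h : IsDegradedCascade p W A B C qB qC)
    (hqB : ∀ a, ∑ b, qB a b = 1) (hqC : ∀ b, ∑ c, qC b c = 1) (i : Fin n) :
    CMI p (fun ω => fun j : {j : Fin n // i < j} => B ω j.1) (fun ω => C ω i)
      (fun ω => (A ω i, (fun j : {j : Fin n // j < i} => A ω j.1), W ω,
        fun j : {j : Fin n // i < j} => C ω j.1)) = 0 := by
  obtain ⟨τ, hτ⟩ := h.exists_factorization hqB hqC i
  refine MarkovTriple.CMI_eq_zero hp (markovTriple_of_factorization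
    (F := fun bh z => (∏ j, qC (bh j) (z.2.2.2 j)) * τ z.2.2.1 z.1 z.2.1 bh)
    (G := fun z c => ∑ b, qB z.1 b * qC b c) ?_)
  rintro bh ⟨a, al, w, ch⟩ c
  rw [← mul_comm, ← hτ]
  exact prb_congr fun ω => by simp only [Prod.mk.injEq]; tauto

end Cascade

theorem degraded_cascade_first_fact_general
    (p : Ω → ℝ) (hp : IsPMF p) {n : ℕ}
    {𝒲 α β γ : Type*} [Fintype 𝒲] [Fintype α] [Fintype β] [Fintype γ]
    (W : Ω → 𝒲) (A : Ω → Fin n → α) (B : Ω → Fin n → β) (C : Ω → Fin n → γ)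
    (qB : α → β → ℝ) (qC : β → γ → ℝ)
    (hqB1 : ∀ a, ∑ b, qB a b = 1)
    (hqC1 : ∀ b, ∑ c, qC b c = 1)
    (hjoint : ∀ (w : 𝒲) (a : Fin n → α) (b : Fin n → β) (c : Fin n → γ),
      prb p (fun ω => (W ω, A ω, B ω, C ω)) (w, a, b, c)
        = prb p (fun ω => (W ω, A ω)) (w, a) * ∏ i, (qB (a i) (b i) * qC (b i) (c i))) :
    ∑ i : Fin n,
      CMI p
        (fun ω => ((fun j : {j : Fin n // j < i} => A ω j.1),
                   (fun j : {j : Fin n // i < j} => B ω j.1)))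
        (fun ω => C ω i)
        (fun ω => (W ω, fun j : {j : Fin n // i < j} => C ω j.1))
    ≤ ∑ i : Fin n,
        CMI p (fun ω => fun j : {j : Fin n // i < j} => B ω j.1)
          (fun ω => A ω i)
          (fun ω => (W ω, fun j : {j : Fin n // j < i} => A ω j.1)) := by
  have hcascade : IsDegradedCascade p W A B C qB qC := hjoint
  have hsum := Finset.sum_le_sum fun i (_ : i ∈ Finset.univ) => CMI_pair_add_le hp.1
    (hcascade.CMI_Bgt_Ci_eq_zero hp.1 hqB1 hqC1 i) (hcascade.CMI_Cgt_Ai_eq_zero hp.1 hqB1 hqC1 i)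
  rw [Finset.sum_add_distrib, Finset.sum_add_distrib, csiszar_sum_identity] at hsum
  linarith

/-- First fact of the converse proof: if `B^n` and `C^n` are
produced from `A^n` by a memoryless degraded cascade (per-letter kernels
`qB : A → B`, `qC : B → C`, conditionally independent across letters and of `W`
given `A^n`), then
`∑_i I(A^{i−1}, B_{i+1}^n; C_i | W, C_{i+1}^n) ≤ ∑_i I(B_{i+1}^n; A_i | W, A^{i−1})`. -/
theorem degraded_cascade_first_fact
    (p : Ω → ℝ) (hp : IsPMF p) {n : ℕ}
    {𝒲 α β γ : Type*} [Fintype 𝒲] [Fintype α] [Fintype β] [Fintype γ]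
    (W : Ω → 𝒲) (A : Ω → Fin n → α) (B : Ω → Fin n → β) (C : Ω → Fin n → γ)
    (qB : α → β → ℝ) (qC : β → γ → ℝ)
    (hqB0 : ∀ a b, 0 ≤ qB a b) (hqB1 : ∀ a, ∑ b, qB a b = 1)
    (hqC0 : ∀ b c, 0 ≤ qC b c) (hqC1 : ∀ b, ∑ c, qC b c = 1)
    (hjoint : ∀ (w : 𝒲) (a : Fin n → α) (b : Fin n → β) (c : Fin n → γ),
      prb p (fun ω => (W ω, A ω, B ω, C ω)) (w, a, b, c)
        = prb p (fun ω => (W ω, A ω)) (w, a) * ∏ i, (qB (a i) (b i) * qC (b i) (c i))) :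
    ∑ i : Fin n,
      CMI p
        (fun ω => ((fun j : {j : Fin n // j < i} => A ω j.1),
                   (fun j : {j : Fin n // i < j} => B ω j.1)))
        (fun ω => C ω i)
        (fun ω => (W ω, fun j : {j : Fin n // i < j} => C ω j.1))
    ≤ ∑ i : Fin n,
        CMI p (fun ω => fun j : {j : Fin n // i < j} => B ω j.1)
          (fun ω => A ω i)
          (fun ω => (W ω, fun j : {j : Fin n // j < i} => A ω j.1)) :=
  degraded_cascade_first_fact_general p hp W A B C qB qC hqB1 hqC1 hjoint

end BRSec
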